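/- arXiv:2302.07638 — 7 statements merged into one kernel-verified Lean document; each statement's English description precedes it below -/
import Mathlib

section
/- Let A and B be n×n complex normal matrices with eigenvalues λ₁,…,λₙ and μ₁,…,μₙ respectively (each list counted with multiplicity, in some order). Then there exists a permutation π of {1,…,n} such that ∑_{i=1}^{n} |λᵢ − μ_{π(i)}|² ≤ ‖A − B‖_F². -/
/-!
Both matrices are unitarily diagonalisable, `A = U diag(λ) U*` and `B = V diag(μ) V*`, because
the real and imaginary parts of a normal matrix are commuting Hermitian matrices, which have a
common orthonormal eigenbasis. With `W = U*V`, unitary invariance of the Frobenius norm gives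
`‖A - B‖_F² = ‖diag(λ) W - W diag(μ)‖_F² = ∑ i j, |W i j|² |λ i - μ j|²`. The matrix
`(|W i j|²)` is doubly stochastic, so by Birkhoff's theorem this linear function of it is at least
its value `∑ i, |λ i - μ (π i)|²` at some permutation matrix.
-/

open Polynomial Matrix

noncomputable section

def frobSqC {ι : Type*} [Fintype ι] (M : Matrix ι ι ℂ) : ℝ := (Mᴴ * M).trace.re

namespace LinearMap

theorem IsSymmetric.exists_orthonormalBasis_common_eigenvectors {𝕜 E ι : Type*} [RCLike 𝕜]
    [NormedAddCommGroup E] [InnerProductSpace 𝕜 E] [FiniteDimensional 𝕜 E] [Fintype ι]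
    {A B : E →ₗ[𝕜] E} (hA : A.IsSymmetric) (hB : B.IsSymmetric) (hAB : Commute A B)
    (hι : Module.finrank 𝕜 E = Fintype.card ι) :
    ∃ (b : OrthonormalBasis ι 𝕜 E) (α β : ι → 𝕜),
      ∀ j, A (b j) = α j • b j ∧ B (b j) = β j • b j := by
  classical
  let V (μ : 𝕜 × 𝕜) := Module.End.eigenspace A μ.2 ⊓ Module.End.eigenspace B μ.1
  have hV : DirectSum.IsInternal V := directSum_isInternal_of_commute hA hB hAB
  have : Fintype {μ // V μ ≠ ⊥} :=
    (WellFoundedGT.finite_ne_bot_of_iSupIndep hV.submodule_iSupIndep).fintype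
  have hV' := DirectSum.isInternal_ne_bot_iff.mpr hV
  have hVorth := (orthogonalFamily_eigenspace_inf_eigenspace hA hB).comp
    (Subtype.val_injective (p := fun μ ↦ V μ ≠ ⊥))
  let b := (hV'.subordinateOrthonormalBasis hι hVorth).reindex (Fintype.equivFin ι).symm
  let μ (j : ι) := (hV'.subordinateOrthonormalBasisIndex hι (Fintype.equivFin ι j) hVorth).1
  refine ⟨b, fun j ↦ (μ j).2, fun j ↦ (μ j).1, fun j ↦ ?_⟩
  have hmem := hV'.subordinateOrthonormalBasis_subordinate hι (Fintype.equivFin ι j) hVorth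
  rw [Submodule.mem_inf, Module.End.mem_eigenspace_iff, Module.End.mem_eigenspace_iff] at hmem
  simpa [b] using hmem

open scoped ComplexStarModule in
theorem exists_orthonormalBasis_eigenvectors_of_isStarNormal {E ι : Type*}
    [NormedAddCommGroup E] [InnerProductSpace ℂ E] [FiniteDimensional ℂ E] [Fintype ι]
    (T : E →ₗ[ℂ] E) [IsStarNormal T] (hι : Module.finrank ℂ E = Fintype.card ι) :
    ∃ (b : OrthonormalBasis ι ℂ E) (d : ι → ℂ), ∀ j, T (b j) = d j • b j := by
  have hsymm (S : selfAdjoint (E →ₗ[ℂ] E)) : (S : E →ₗ[ℂ] E).IsSymmetric :=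
    (isSymmetric_iff_isSelfAdjoint _).mpr S.2
  obtain ⟨b, α, β, hb⟩ := (hsymm (ℜ T)).exists_orthonormalBasis_common_eigenvectors
    (hsymm (ℑ T)) (Commute.realPart_imaginaryPart T) hι
  refine ⟨b, fun j ↦ α j + Complex.I * β j, fun j ↦ ?_⟩
  conv_lhs => rw [← realPart_add_I_smul_imaginaryPart T]
  simp [(hb j).1, (hb j).2, add_smul, mul_smul]

end LinearMap

theorem exists_perm_apply_eq_of_multiset_map_eq {ι α : Type*} [Fintype ι]
    {f g : ι → α} (h : Finset.univ.val.map f = Finset.univ.val.map g) :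
    ∃ σ : Equiv.Perm ι, ∀ i, f (σ i) = g i := by
  classical
  have hcard (a : α) : Fintype.card {i // g i = a} = Fintype.card {i // f i = a} := by
    have := congrArg (Multiset.count a) h.symm
    simp only [Multiset.count_map, eq_comm (a := a)] at this
    simpa only [Fintype.card_subtype, Finset.card, Finset.filter_val] using this
  exact ⟨Equiv.ofFiberEquiv fun a ↦ Fintype.equivOfCardEq (hcard a), Equiv.ofFiberEquiv_map _⟩

theorem exists_perm_apply_eq_of_prod_X_sub_C_eq {ι R : Type*} [Fintype ι] [CommRing R]
    [IsDomain R] {f g : ι → R} (h : ∏ i, (X - C (f i)) = ∏ i, (X - C (g i))) :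
    ∃ σ : Equiv.Perm ι, ∀ i, f (σ i) = g i := by
  have hroots (f : ι → R) : (∏ i, (X - C (f i))).roots = Finset.univ.val.map f := by
    rw [Finset.prod_eq_multiset_prod, ← roots_multiset_prod_X_sub_C (Finset.univ.val.map f),
      Multiset.map_map]
    rfl
  apply exists_perm_apply_eq_of_multiset_map_eq
  rw [← hroots, ← hroots, h]

namespace Matrix

variable {m : Type*} [Fintype m] [DecidableEq m]

theorem charpoly_unitary_conj {R : Type*} [CommRing R] [StarRing R] {U : Matrix m m R}
    (hU : U ∈ unitaryGroup m R) (M : Matrix m m R) :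
    (U * M * star U).charpoly = M.charpoly := by
  rw [charpoly_mul_comm, ← mul_assoc, Unitary.star_mul_self_of_mem hU, one_mul]

theorem exists_unitary_eq_conj_diagonal_of_orthonormalBasis {𝕜 : Type*} [RCLike 𝕜]
    {A : Matrix m m 𝕜} (b : OrthonormalBasis m 𝕜 (EuclideanSpace 𝕜 m)) {d : m → 𝕜}
    (hb : ∀ j, A *ᵥ b j = d j • b j) :
    ∃ U ∈ unitaryGroup m 𝕜, A = U * diagonal d * star U := by
  let U := (EuclideanSpace.basisFun m 𝕜).toBasis.toMatrix b.toBasis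
  have hU : U ∈ unitaryGroup m 𝕜 :=
    (EuclideanSpace.basisFun m 𝕜).toMatrix_orthonormalBasis_mem_unitary b
  have hU_apply (i j : m) : U i j = b j i := rfl
  have hAU : A * U = U * diagonal d := by
    ext i j
    rw [mul_diagonal]
    simpa [hU_apply, mul_apply, mulVec, dotProduct, mul_comm] using congrFun (hb j) i
  refine ⟨U, hU, ?_⟩
  rw [← hAU, mul_assoc, Unitary.mul_star_self_of_mem hU, mul_one]

theorem exists_orthonormalBasis_mulVec_eq_smul_of_isStarNormal (A : Matrix m m ℂ)
    [IsStarNormal A] :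
    ∃ (b : OrthonormalBasis m ℂ (EuclideanSpace ℂ m)) (d : m → ℂ), ∀ j, A *ᵥ b j = d j • b j := by
  have : IsStarNormal (toEuclideanLin A) := ⟨by
    rw [LinearMap.star_eq_adjoint, ← toEuclideanLin_conjTranspose_eq_adjoint]
    exact (star_comm_self (x := A)).map (toLpLinAlgEquiv 2)⟩
  obtain ⟨b, d, hb⟩ := LinearMap.exists_orthonormalBasis_eigenvectors_of_isStarNormal
    (toEuclideanLin A) finrank_euclideanSpace
  exact ⟨b, d, fun j ↦ by simpa using congrArg WithLp.ofLp (hb j)⟩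

theorem exists_unitary_eq_conj_diagonal_of_charpoly_eq (A : Matrix m m ℂ) [IsStarNormal A]
    {lam : m → ℂ} (h : A.charpoly = ∏ i, (X - C (lam i))) :
    ∃ U ∈ unitaryGroup m ℂ, A = U * diagonal lam * star U := by
  obtain ⟨b, d, hb⟩ := A.exists_orthonormalBasis_mulVec_eq_smul_of_isStarNormal
  obtain ⟨U, hU, hA⟩ := exists_unitary_eq_conj_diagonal_of_orthonormalBasis b hb
  obtain ⟨σ, hσ⟩ := exists_perm_apply_eq_of_prod_X_sub_C_eq (f := d) (g := lam) <| by
    rw [← charpoly_diagonal, ← charpoly_unitary_conj hU, ← hA, h]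
  exact exists_unitary_eq_conj_diagonal_of_orthonormalBasis (b.reindex σ.symm) fun j ↦ by
    simpa [hσ] using hb (σ j)

theorem norm_sq_mem_doublyStochastic {𝕜 : Type*} [RCLike 𝕜] {W : Matrix m m 𝕜}
    (hW : W ∈ unitaryGroup m 𝕜) : of (fun i j ↦ ‖W i j‖ ^ 2) ∈ doublyStochastic ℝ m := by
  rw [mem_doublyStochastic_iff_sum]
  refine ⟨fun i j ↦ sq_nonneg _, fun i ↦ ?_, fun j ↦ ?_⟩
  · have := congrArg (· i i) (mem_unitaryGroup_iff.mp hW)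
    simp only [mul_apply, star_apply, one_apply_eq, RCLike.star_def, RCLike.mul_conj] at this
    simp only [of_apply]
    exact_mod_cast this
  · have := congrArg (· j j) (mem_unitaryGroup_iff'.mp hW)
    simp only [mul_apply, star_apply, one_apply_eq, RCLike.star_def, RCLike.conj_mul] at this
    simp only [of_apply]
    exact_mod_cast this

end Matrix

theorem exists_perm_sum_le_of_mem_doublyStochastic {R n : Type*} [Field R] [LinearOrder R]
    [IsStrictOrderedRing R] [Fintype n] [DecidableEq n] {S : Matrix n n R}
    (hS : S ∈ doublyStochastic R n) (c : n → n → R) :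
    ∃ σ : Equiv.Perm n, ∑ i, c i (σ i) ≤ ∑ i, ∑ j, S i j * c i j := by
  let φ : Matrix n n R →ₗ[R] R :=
    { toFun M := ∑ i, ∑ j, M i j * c i j
      map_add' M N := by simp only [Matrix.add_apply, add_mul, Finset.sum_add_distrib]
      map_smul' r M := by
        simp only [Matrix.smul_apply, smul_eq_mul, mul_assoc, Finset.mul_sum, RingHom.id_apply] }
  rw [← SetLike.mem_coe, doublyStochastic_eq_convexHull_permMatrix] at hS
  obtain ⟨_, ⟨σ, rfl⟩, hσ⟩ :=
    (φ.concaveOn convex_univ).exists_le_of_mem_convexHull (Set.subset_univ _) hS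
  refine ⟨σ, le_of_eq_of_le ?_ hσ⟩
  simp [φ, Equiv.Perm.permMatrix, PEquiv.toMatrix_apply]

section Frobenius

variable {n : Type*} [Fintype n]

theorem frobSqC_eq_sum_norm_sq (M : Matrix n n ℂ) : frobSqC M = ∑ i, ∑ j, ‖M i j‖ ^ 2 := by
  rw [frobSqC, trace, Complex.re_sum, Finset.sum_comm]
  refine Finset.sum_congr rfl fun j _ ↦ ?_
  simp only [diag_apply, mul_apply, conjTranspose_apply, Complex.re_sum, Complex.star_def,
    Complex.conj_mul', ← Complex.ofReal_pow, Complex.ofReal_re]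

theorem frobSqC_unitary_mul_mul_star [DecidableEq n] {U V : Matrix n n ℂ}
    (hU : U ∈ unitaryGroup n ℂ) (hV : V ∈ unitaryGroup n ℂ) (M : Matrix n n ℂ) :
    frobSqC (U * M * star V) = frobSqC M := by
  have hU' : Uᴴ * U = 1 := Unitary.star_mul_self_of_mem hU
  have h : (U * M * star V)ᴴ * (U * M * star V) = V * (Mᴴ * M) * star V := by
    simp only [star_eq_conjTranspose, conjTranspose_mul, conjTranspose_conjTranspose, mul_assoc,
      ← mul_assoc Uᴴ U, hU', one_mul]
  rw [frobSqC, frobSqC, h, trace_mul_cycle, Unitary.star_mul_self_of_mem hV, one_mul]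

theorem frobSqC_diagonal_mul_sub_mul_diagonal [DecidableEq n] (W : Matrix n n ℂ) (d f : n → ℂ) :
    frobSqC (diagonal d * W - W * diagonal f) = ∑ i, ∑ j, ‖W i j‖ ^ 2 * ‖d i - f j‖ ^ 2 := by
  simp only [frobSqC_eq_sum_norm_sq, Matrix.sub_apply, diagonal_mul, mul_diagonal,
    show ∀ i j, d i * W i j - W i j * f j = W i j * (d i - f j) from fun _ _ ↦ by ring,
    norm_mul, mul_pow]

theorem exists_perm_sum_norm_sq_sub_le_frobSqC [DecidableEq n] {U V : Matrix n n ℂ}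
    (hU : U ∈ unitaryGroup n ℂ) (hV : V ∈ unitaryGroup n ℂ) (d f : n → ℂ) :
    ∃ σ : Equiv.Perm n, ∑ i, ‖d i - f (σ i)‖ ^ 2 ≤
      frobSqC (U * diagonal d * star U - V * diagonal f * star V) := by
  let W := star U * V
  have hW : W ∈ unitaryGroup n ℂ := mul_mem (Unitary.star_mem hU) hV
  have hconj : U * diagonal d * star U - V * diagonal f * star V =
      U * (diagonal d * W - W * diagonal f) * star V := by
    simp only [W, Matrix.mul_sub, Matrix.sub_mul, ← mul_assoc, Unitary.mul_star_self_of_mem hU,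
      one_mul]
    simp only [mul_assoc, Unitary.mul_star_self_of_mem hV, mul_one]
  rw [hconj, frobSqC_unitary_mul_mul_star hU hV, frobSqC_diagonal_mul_sub_mul_diagonal]
  exact exists_perm_sum_le_of_mem_doublyStochastic (norm_sq_mem_doublyStochastic hW)
    fun i j ↦ ‖d i - f j‖ ^ 2

end Frobenius

/-- **The Hoffman–Wielandt inequality.** If `A` and `B` are `n × n` complex normal matrices
with eigenvalues `λ₁, …, λₙ` and `μ₁, …, μₙ` (with multiplicity), then there is a
permutation `π` with `∑ i, |λᵢ - μ_{π i}|² ≤ ‖A - B‖_F²`. -/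
theorem hoffman_wielandt {n : ℕ} (A B : Matrix (Fin n) (Fin n) ℂ)
    (hA : A * Aᴴ = Aᴴ * A) (hB : B * Bᴴ = Bᴴ * B)
    (lam mu : Fin n → ℂ)
    (hlam : A.charpoly = ∏ i, (X - C (lam i)))
    (hmu : B.charpoly = ∏ i, (X - C (mu i))) :
    ∃ π : Equiv.Perm (Fin n),
      ∑ i, ‖lam i - mu (π i)‖ ^ 2 ≤ frobSqC (A - B) := by
  have : IsStarNormal A := ⟨hA.symm⟩
  have : IsStarNormal B := ⟨hB.symm⟩
  obtain ⟨U, hU, rfl⟩ := A.exists_unitary_eq_conj_diagonal_of_charpoly_eq hlam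
  obtain ⟨V, hV, rfl⟩ := B.exists_unitary_eq_conj_diagonal_of_charpoly_eq hmu
  exact exists_perm_sum_norm_sq_sub_le_frobSqC hU hV lam mu
end
end

section
/- A complex matrix A ∈ M_n(ℂ) ⊆ M_n(ℍ) is diagonalizable over the quaternions ℍ (i.e., there exists an invertible S ∈ M_n(ℍ) with S⁻¹AS diagonal) if and only if A is diagonalizable over ℂ (i.e., there exists an invertible X ∈ M_n(ℂ) with X⁻¹AX diagonal). -/
/-!
If `T * A * S` is diagonal with `S * T = T * S = 1`, then `A` is annihilated by the product of
the distinct real minimal polynomials of the diagonal entries. Over the perfect field `ℝ` these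
are irreducible, hence separable and pairwise coprime, so the product is separable. Over `ℂ` it
becomes a squarefree polynomial annihilating `A`, so `A` is semisimple and, `ℂ` being
algebraically closed, has a basis of eigenvectors. Conversely, the ring homomorphism `ℂ → ℍ`
carries a complex diagonalization to a quaternionic one.
-/

open scoped Quaternion

noncomputable section

/-- The canonical embedding of the complex numbers into the real quaternions. -/
def Complex.toQuat (z : ℂ) : ℍ[ℝ] := ⟨z.re, z.im, 0, 0⟩

open Polynomial

theorem Polynomial.Monic.isCoprime_of_irreducible_of_ne {K : Type*} [Field K] {p q : K[X]}
    (hp : p.Monic) (hq : q.Monic) (hp' : Irreducible p) (hq' : Irreducible q) (hne : p ≠ q) :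
    IsCoprime p q :=
  hp'.coprime_iff_not_dvd.2 fun h ↦
    hne <| eq_of_monic_of_associated hp hq <| hp'.associated_of_dvd hq' h

theorem Polynomial.exists_separable_forall_aeval_eq_zero {K B ι : Type*} [Field K]
    [PerfectField K] [Ring B] [IsDomain B] [Algebra K B] [Fintype ι] {x : ι → B}
    (hx : ∀ i, IsIntegral K (x i)) :
    ∃ p : K[X], p.Separable ∧ ∀ i, aeval (x i) p = 0 := by
  classical
  have hirr (i) : Irreducible (minpoly K (x i)) := minpoly.irreducible (hx i)
  refine ⟨∏ q ∈ Finset.univ.image (minpoly K ∘ x), q, ?_, fun i ↦ ?_⟩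
  · refine separable_prod' ?_ ?_ <;> simp only [Finset.mem_image, Finset.mem_univ, true_and]
    · rintro _ ⟨i, rfl⟩ _ ⟨j, rfl⟩ hne
      exact (minpoly.monic (hx i)).isCoprime_of_irreducible_of_ne (minpoly.monic (hx j))
        (hirr i) (hirr j) hne
    · rintro _ ⟨i, rfl⟩
      exact PerfectField.separable_of_irreducible (hirr i)
  · exact aeval_eq_zero_of_dvd_aeval_eq_zero
      (Finset.dvd_prod_of_mem id (Finset.mem_image_of_mem _ (Finset.mem_univ i)))
      (minpoly.aeval K (x i))

theorem Polynomial.aeval_mul_mul_of_mul_eq_one {R A : Type*} [CommSemiring R] [Semiring A]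
    [Algebra R A] {S T : A} (hST : S * T = 1) (hTS : T * S = 1) (x : A) (p : R[X]) :
    aeval (S * x * T) p = S * aeval x p * T := by
  let u : Aˣ := ⟨S, T, hST, hTS⟩
  simpa [ConjAct.units_smul_def, u] using
    aeval_algHom_apply (MulSemiringAction.toAlgHom R A (ConjAct.toConjAct u)) x p

namespace Matrix

theorem aeval_diagonal {R α n : Type*} [CommSemiring R] [Semiring α] [Algebra R α]
    [Fintype n] [DecidableEq n] (d : n → α) (p : R[X]) :
    aeval (diagonal d) p = diagonal fun i ↦ aeval (d i) p := by
  rw [← diagonalAlgHom_apply (R := R), aeval_algHom_apply, diagonalAlgHom_apply, aeval_pi_apply]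

theorem exists_separable_aeval_eq_zero_of_isDiag {K B n : Type*} [Field K] [PerfectField K]
    [Ring B] [IsDomain B] [Algebra K B] [Algebra.IsIntegral K B] [Fintype n] [DecidableEq n]
    {M S T : Matrix n n B} (hST : S * T = 1) (hTS : T * S = 1) (hdiag : (T * M * S).IsDiag) :
    ∃ p : K[X], p.Separable ∧ aeval M p = 0 := by
  obtain ⟨p, hp, hroots⟩ := exists_separable_forall_aeval_eq_zero (K := K)
    fun i ↦ Algebra.IsIntegral.isIntegral ((T * M * S).diag i)
  refine ⟨p, hp, ?_⟩
  have hM : M = S * (T * M * S) * T := by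
    simp only [← mul_assoc, hST, one_mul]; rw [mul_assoc, hST, mul_one]
  rw [hM, aeval_mul_mul_of_mul_eq_one hST hTS, ← hdiag.diagonal_diag, aeval_diagonal,
    funext hroots, diagonal_zero, mul_zero, zero_mul]

end Matrix

theorem Module.End.IsSemisimple.exists_basis_apply_eq_smul {K V : Type*} [Field K]
    [IsAlgClosed K] [AddCommGroup V] [Module K V] [FiniteDimensional K V] {f : End K V}
    (hf : f.IsSemisimple) :
    ∃ (b : Basis (Fin (Module.finrank K V)) K V) (μ : Fin (Module.finrank K V) → K),
      ∀ i, f (b i) = μ i • b i := by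
  classical
  have hint := DirectSum.isInternal_submodule_of_iSupIndep_of_iSup_eq_top
    f.eigenspaces_iSupIndep hf.iSup_eigenspace_eq_top
  let b := hint.collectedBasis fun μ ↦ Module.finBasis K (f.eigenspace μ)
  let e := b.indexEquiv (Module.finBasis K V)
  exact ⟨b.reindex e, fun i ↦ (e.symm i).1, fun i ↦ by
    rw [Basis.reindex_apply]; exact mem_eigenspace_iff.mp (hint.collectedBasis_mem _ (e.symm i))⟩

theorem Matrix.exists_isDiag_conj_of_squarefree_aeval_eq_zero {K n : Type*} [Field K]
    [IsAlgClosed K] [Fintype n] [DecidableEq n] {A : Matrix n n K} {p : K[X]}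
    (hp : Squarefree p) (hA : aeval A p = 0) :
    ∃ V W : Matrix n n K, V * W = 1 ∧ W * V = 1 ∧ (W * A * V).IsDiag := by
  set f : Module.End K (n → K) := toLinAlgEquiv' A
  have hf : f.IsSemisimple := Module.End.isSemisimple_of_squarefree_aeval_eq_zero hp
    (by rw [aeval_algHom_apply, hA, map_zero])
  obtain ⟨b, μ, hb⟩ := hf.exists_basis_apply_eq_smul
  let e := Pi.basisFun K n
  let b' := b.reindex (b.indexEquiv e)
  refine ⟨e.toMatrix b', b'.toMatrix e, e.toMatrix_mul_toMatrix_flip b',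
    b'.toMatrix_mul_toMatrix_flip e, ?_⟩
  have hA : LinearMap.toMatrix e e f = A := by
    rw [LinearMap.toMatrix_eq_toMatrix']; exact LinearMap.toMatrix'_toLin' A
  rw [← hA, basis_toMatrix_mul_linearMap_toMatrix_mul_basis_toMatrix]
  intro i j hij
  simp [LinearMap.toMatrix_apply, b', hb, hij]

/-- A complex matrix, viewed as a quaternion matrix, is diagonalizable over the
quaternions (there is an invertible quaternion matrix `S` with `S⁻¹ * A * S` diagonal)
if and only if it is diagonalizable over the complex numbers (there is an invertible
complex matrix `V` with `V⁻¹ * A * V` diagonal). -/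
theorem diagonalizable_quaternion_iff_complex {n : ℕ} (A : Matrix (Fin n) (Fin n) ℂ) :
    (∃ S T : Matrix (Fin n) (Fin n) ℍ[ℝ], S * T = 1 ∧ T * S = 1 ∧
      (T * A.map Complex.toQuat * S).IsDiag) ↔
    (∃ V W : Matrix (Fin n) (Fin n) ℂ, V * W = 1 ∧ W * V = 1 ∧
      (W * A * V).IsDiag) := by
  have hmap (M : Matrix (Fin n) (Fin n) ℂ) :
      M.map Complex.toQuat = Quaternion.ofComplex.mapMatrix M := rfl
  constructor
  · rintro ⟨S, T, hST, hTS, hdiag⟩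
    obtain ⟨p, hp, hAp⟩ := Matrix.exists_separable_aeval_eq_zero_of_isDiag (K := ℝ) hST hTS hdiag
    have hA : aeval A p = 0 := by
      refine Matrix.map_injective Quaternion.ofComplex.toRingHom.injective
        (?_ : Quaternion.ofComplex.mapMatrix _ = Quaternion.ofComplex.mapMatrix _)
      rw [← aeval_algHom_apply, ← hmap, hAp, map_zero]
    refine Matrix.exists_isDiag_conj_of_squarefree_aeval_eq_zero
      (hp.map (f := algebraMap ℝ ℂ)).squarefree ?_
    rw [aeval_map_algebraMap, hA]
  · rintro ⟨V, W, hVW, hWV, hdiag⟩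
    refine ⟨Quaternion.ofComplex.mapMatrix V, Quaternion.ofComplex.mapMatrix W, ?_, ?_, ?_⟩
    · rw [← map_mul, hVW, map_one]
    · rw [← map_mul, hWV, map_one]
    · rw [hmap, ← map_mul, ← map_mul]
      exact hdiag.map (map_zero _)
end
end

section
/- For every A ∈ M_n(ℍ), the spectral norm of its complex adjoint matrix satisfies ‖χ_A‖₂ = ‖A‖₂. -/
open scoped Quaternion
open Polynomial

noncomputable section

/-- The first complex component of a quaternion: `q = c1 q + (c2 q) * j`. -/
def Quaternion.c1 (q : ℍ[ℝ]) : ℂ := ⟨q.re, q.imI⟩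

/-- The second complex component of a quaternion: `q = c1 q + (c2 q) * j`. -/
def Quaternion.c2 (q : ℍ[ℝ]) : ℂ := ⟨q.imJ, q.imK⟩

/-- The complex adjoint matrix `χ_A = [[A₁, A₂], [-conj A₂, conj A₁]]` of a
quaternion matrix `A = A₁ + A₂ j`. -/
def Matrix.chi {ι : Type*} (A : Matrix ι ι ℍ[ℝ]) : Matrix (ι ⊕ ι) (ι ⊕ ι) ℂ :=
  Matrix.fromBlocks (A.map Quaternion.c1) (A.map Quaternion.c2)
    (-(A.map fun q => starRingEnd ℂ (Quaternion.c2 q)))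
    (A.map fun q => starRingEnd ℂ (Quaternion.c1 q))

/-- Euclidean norm of a vector with entries in a normed division ring. -/
def euclNorm {ι : Type*} [Fintype ι] {K : Type*} [NormedDivisionRing K] (x : ι → K) : ℝ :=
  Real.sqrt (∑ i, ‖x i‖ ^ 2)

/-- Spectral norm of a matrix: `‖M‖₂ = sup_{x ≠ 0} ‖Mx‖₂ / ‖x‖₂`. -/
def specNorm {ι : Type*} [Fintype ι] {K : Type*} [NormedDivisionRing K]
    (M : Matrix ι ι K) : ℝ :=
  sSup {r : ℝ | ∃ x : ι → K, x ≠ 0 ∧ r = euclNorm (M.mulVec x) / euclNorm x}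

/-!
Write `x = x₁ + x₂ j` with `x₁, x₂ ∈ ℂⁿ`. Since `j z = conj z j`, left multiplication by
`A = A₁ + A₂ j` sends `x` to `(A₁ x₁ - A₂ conj x₂) + (A₁ x₂ + A₂ conj x₁) j`, so in the coordinates
`x ↦ (x₁, -conj x₂)` it is given by the matrix `χ_A`. These coordinates are an additive bijection
`ℍⁿ ≃ ℂ²ⁿ` preserving the Euclidean norm (`|q|² = |q₁|² + |q₂|²`), hence the two sets of quotients
`‖Mx‖₂ / ‖x‖₂` whose suprema define the spectral norms coincide.
-/

open Matrix

namespace Quaternion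

def c1AddMonoidHom : ℍ[ℝ] →+ ℂ where
  toFun := c1
  map_zero' := by simp [c1, Complex.ext_iff]
  map_add' a b := by simp [c1, Complex.ext_iff]

def c2AddMonoidHom : ℍ[ℝ] →+ ℂ where
  toFun := c2
  map_zero' := by simp [c2, Complex.ext_iff]
  map_add' a b := by simp [c2, Complex.ext_iff]

theorem c1_sum {ι : Type*} (s : Finset ι) (f : ι → ℍ[ℝ]) :
    c1 (∑ i ∈ s, f i) = ∑ i ∈ s, c1 (f i) :=
  map_sum c1AddMonoidHom f s

theorem c2_sum {ι : Type*} (s : Finset ι) (f : ι → ℍ[ℝ]) :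
    c2 (∑ i ∈ s, f i) = ∑ i ∈ s, c2 (f i) :=
  map_sum c2AddMonoidHom f s

theorem c1_mul (a b : ℍ[ℝ]) : c1 (a * b) = c1 a * c1 b - c2 a * starRingEnd ℂ (c2 b) := by
  apply Complex.ext <;> simp [c1, c2] <;> ring

theorem c2_mul (a b : ℍ[ℝ]) : c2 (a * b) = c1 a * c2 b + c2 a * starRingEnd ℂ (c1 b) := by
  apply Complex.ext <;> simp [c1, c2] <;> ring

theorem norm_c1_sq_add_norm_c2_sq (q : ℍ[ℝ]) : ‖c1 q‖ ^ 2 + ‖c2 q‖ ^ 2 = ‖q‖ ^ 2 := by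
  rw [sq ‖q‖, ← normSq_eq_norm_mul_self, normSq_def', Complex.sq_norm, Complex.sq_norm]
  simp only [c1, c2, Complex.normSq_mk]
  ring

variable {ι : Type*}

def complexCoords : (ι → ℍ[ℝ]) ≃+ (ι ⊕ ι → ℂ) where
  toFun x := Sum.elim (fun i => c1 (x i)) (fun i => -starRingEnd ℂ (c2 (x i)))
  invFun y i := ⟨(y (.inl i)).re, (y (.inl i)).im, -(y (.inr i)).re, (y (.inr i)).im⟩
  left_inv x := by ext i <;> simp [c1, c2]
  right_inv y := by ext (i | i) <;> simp [c1, c2, Complex.ext_iff]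
  map_add' x y := by ext (i | i) <;> simp [c1, c2, Complex.ext_iff, add_comm]

theorem complexCoords_inl (x : ι → ℍ[ℝ]) (i : ι) : complexCoords x (.inl i) = c1 (x i) := rfl

theorem complexCoords_inr (x : ι → ℍ[ℝ]) (i : ι) :
    complexCoords x (.inr i) = -starRingEnd ℂ (c2 (x i)) := rfl

theorem euclNorm_complexCoords [Fintype ι] (x : ι → ℍ[ℝ]) :
    euclNorm (complexCoords x) = euclNorm x := by
  simp only [euclNorm, Fintype.sum_sum_type, ← Finset.sum_add_distrib, ← norm_c1_sq_add_norm_c2_sq,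
    complexCoords_inl, complexCoords_inr, norm_neg, Complex.norm_conj]

end Quaternion

open Quaternion in
theorem Matrix.chi_mulVec_complexCoords {ι : Type*} [Fintype ι] (A : Matrix ι ι ℍ[ℝ])
    (x : ι → ℍ[ℝ]) : A.chi *ᵥ complexCoords x = complexCoords (A *ᵥ x) := by
  ext (i | i)
  · simp only [chi, mulVec, dotProduct, Fintype.sum_sum_type, fromBlocks_apply₁₁,
      fromBlocks_apply₁₂, map_apply, complexCoords_inl, complexCoords_inr, c1_sum, c1_mul,
      ← Finset.sum_add_distrib]
    exact Finset.sum_congr rfl fun j _ => by ring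
  · simp only [chi, mulVec, dotProduct, Fintype.sum_sum_type, fromBlocks_apply₂₁,
      fromBlocks_apply₂₂, neg_apply, map_apply, complexCoords_inl, complexCoords_inr, c2_sum,
      c2_mul, ← Finset.sum_add_distrib, map_sum, map_add, map_mul, Complex.conj_conj,
      ← Finset.sum_neg_distrib]
    exact Finset.sum_congr rfl fun j _ => by ring

theorem specNorm_eq_of_addEquiv {ι κ K L : Type*} [Fintype ι] [Fintype κ] [NormedDivisionRing K]
    [NormedDivisionRing L] {M : Matrix ι ι K} {N : Matrix κ κ L} (e : (ι → K) ≃+ (κ → L))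
    (he_norm : ∀ x, euclNorm (e x) = euclNorm x) (he_mulVec : ∀ x, N *ᵥ e x = e (M *ᵥ x)) :
    specNorm N = specNorm M := by
  simp only [specNorm, e.surjective.exists, he_mulVec, he_norm, ne_eq,
    EmbeddingLike.map_eq_zero_iff]

/-- For every quaternion matrix `A`, the spectral norm of the complex adjoint matrix
satisfies `‖χ_A‖₂ = ‖A‖₂`. -/
theorem specNorm_chi {n : ℕ} (A : Matrix (Fin n) (Fin n) ℍ[ℝ]) :
    specNorm (Matrix.chi A) = specNorm A :=
  specNorm_eq_of_addEquiv Quaternion.complexCoords Quaternion.euclNorm_complexCoords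
    A.chi_mulVec_complexCoords
end
end

section
/- Let μ₁,…,μₙ and δ₁,…,δₙ be complex numbers in the closed upper half plane. Extend these to lists of length 2n by setting μ_{n+i} = μ̄ᵢ and δ_{n+i} = δ̄ᵢ for 1 ≤ i ≤ n. Then for any permutation σ of {1,…,2n} there exists a permutation π of {1,…,n} such that 2∑_{i=1}^{n} |μᵢ − δ_{π(i)}|² ≤ ∑_{i=1}^{2n} |μᵢ − δ_{σ(i)}|². -/
/-!
Folding each index of `Fin n ⊕ Fin n` onto `Fin n` can only decrease every summand, by
`|a - b| ≤ |ā - b|` on the closed upper half plane and conjugation invariance of `|·|`.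
The folded sum equals `∑ i j, N i j * |μᵢ - δⱼ|²`, where `N i j` counts the indices `k` with
`k` folding to `i` and `σ k` folding to `j`. Every row and column of `N` sums to `2`, so `N / 2`
is doubly stochastic, and by Birkhoff's theorem the linear functional `M ↦ ∑ M i j |μᵢ - δⱼ|²`
attains its minimum over doubly stochastic matrices at a permutation matrix.
-/

open Finset Equiv ComplexConjugate

theorem Complex.norm_sub_le_norm_conj_sub {a b : ℂ} (ha : 0 ≤ a.im) (hb : 0 ≤ b.im) :
    ‖a - b‖ ≤ ‖conj a - b‖ := by
  rw [← sq_le_sq₀ (norm_nonneg _) (norm_nonneg _), Complex.sq_norm, Complex.sq_norm,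
    Complex.normSq_apply, Complex.normSq_apply]
  simp only [Complex.sub_re, Complex.sub_im, Complex.conj_re, Complex.conj_im]
  nlinarith [mul_nonneg ha hb]

theorem Complex.norm_sub_le_norm_sum_elim_conj_sub {ι : Type*} {mu delta : ι → ℂ}
    (hmu : ∀ i, 0 ≤ (mu i).im) (hdelta : ∀ i, 0 ≤ (delta i).im) (k l : ι ⊕ ι) :
    ‖mu (Sum.elim id id k) - delta (Sum.elim id id l)‖ ≤
      ‖Sum.elim mu (fun j => conj (mu j)) k - Sum.elim delta (fun j => conj (delta j)) l‖ := by
  rcases k with i | i <;> rcases l with j | j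
  · exact le_rfl
  · calc _ ≤ ‖conj (mu i) - delta j‖ := norm_sub_le_norm_conj_sub (hmu i) (hdelta j)
      _ = _ := by rw [← Complex.norm_conj]; simp
  · exact norm_sub_le_norm_conj_sub (hmu i) (hdelta j)
  · simp [← map_sub]

theorem card_filter_sum_elim_id {ι : Type*} [Fintype ι] [DecidableEq ι] (i : ι) :
    #{k : ι ⊕ ι | Sum.elim id id k = i} = 2 := by
  rw [show ({k : ι ⊕ ι | Sum.elim id id k = i} : Finset _) = {Sum.inl i, Sum.inr i} by
    ext (j | j) <;> simp [eq_comm]]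
  simp

section

variable {ι : Type*} [Fintype ι] [DecidableEq ι]

theorem exists_perm_sum_le_of_mem_doublyStochastic_s6 {M : Matrix ι ι ℝ}
    (hM : M ∈ doublyStochastic ℝ ι) (c : ι → ι → ℝ) :
    ∃ τ : Perm ι, ∑ i, c i (τ i) ≤ ∑ i, ∑ j, M i j * c i j := by
  let cost : Matrix ι ι ℝ →ₗ[ℝ] ℝ :=
    { toFun := fun A => ∑ i, ∑ j, A i j * c i j
      map_add' := fun A B => by simp only [Matrix.add_apply, add_mul, sum_add_distrib]
      map_smul' := fun r A => by
        simp only [Matrix.smul_apply, smul_eq_mul, mul_sum, mul_assoc, RingHom.id_apply] }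
  rw [← SetLike.mem_coe, doublyStochastic_eq_convexHull_permMatrix] at hM
  obtain ⟨_, ⟨τ, rfl⟩, hτ⟩ :=
    (cost.concaveOn convex_univ).exists_le_of_mem_convexHull (Set.subset_univ _) hM
  refine ⟨τ, le_of_eq_of_le ?_ hτ⟩
  simp [cost, Perm.permMatrix, PEquiv.toMatrix_apply, ite_mul]

variable {κ : Type*} [Fintype κ] (p : κ → ι) (σ : Perm κ)

def transitionCount (i j : ι) : ℕ := #{k | p k = i ∧ p (σ k) = j}

theorem sum_transitionCount_right (i : ι) :
    ∑ j, transitionCount p σ i j = #{k | p k = i} := by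
  rw [card_eq_sum_card_fiberwise (f := fun k => p (σ k)) (t := univ) (fun _ _ => mem_univ _)]
  simp [transitionCount, filter_filter]

theorem sum_transitionCount_left (j : ι) :
    ∑ i, transitionCount p σ i j = #{k | p k = j} :=
  calc ∑ i, transitionCount p σ i j = #{k | p (σ k) = j} := by
        rw [card_eq_sum_card_fiberwise (f := p) (t := univ) (fun _ _ => mem_univ _)]
        simp [transitionCount, filter_filter, and_comm]
    _ = #{k | p k = j} := by
        simp only [card_filter]
        exact Equiv.sum_comp σ (fun k => if p k = j then 1 else 0)

theorem sum_comp_eq_sum_transitionCount_mul (f : ι → ι → ℝ) :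
    ∑ k, f (p k) (p (σ k)) = ∑ i, ∑ j, (transitionCount p σ i j : ℝ) * f i j := by
  have h (k : κ) :
      f (p k) (p (σ k)) = ∑ i, ∑ j, if p k = i ∧ p (σ k) = j then f i j else 0 := by
    simp [ite_and]
  rw [sum_congr rfl fun k _ => h k, sum_comm]
  refine sum_congr rfl fun i _ => ?_
  rw [sum_comm]
  simp only [transitionCount, natCast_card_filter, sum_mul, boole_mul]

variable {p} {m : ℕ}

theorem transitionCount_div_mem_doublyStochastic (hp : ∀ i, #{k | p k = i} = m) (hm : m ≠ 0) :
    Matrix.of (fun i j => (transitionCount p σ i j : ℝ) / m) ∈ doublyStochastic ℝ ι := by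
  have hm' : (m : ℝ) ≠ 0 := Nat.cast_ne_zero.2 hm
  simp only [mem_doublyStochastic_iff_sum, Matrix.of_apply]
  refine ⟨fun i j => by positivity, fun i => ?_, fun j => ?_⟩
  · rw [← sum_div, ← Nat.cast_sum, sum_transitionCount_right, hp, div_self hm']
  · rw [← sum_div, ← Nat.cast_sum, sum_transitionCount_left, hp, div_self hm']

theorem exists_perm_mul_sum_le_sum_comp (hp : ∀ i, #{k | p k = i} = m) (hm : m ≠ 0)
    (f : ι → ι → ℝ) : ∃ τ : Perm ι, m * ∑ i, f i (τ i) ≤ ∑ k, f (p k) (p (σ k)) := by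
  obtain ⟨τ, hτ⟩ := exists_perm_sum_le_of_mem_doublyStochastic_s6
    (transitionCount_div_mem_doublyStochastic σ hp hm) f
  refine ⟨τ, ?_⟩
  rw [sum_comp_eq_sum_transitionCount_mul, ← le_div_iff₀' (Nat.cast_pos.2 (Nat.pos_of_ne_zero hm))]
  simpa [div_mul_eq_mul_div, sum_div] using hτ

end

/-- Let `μ₁, …, μₙ` and `δ₁, …, δₙ` lie in the closed upper half plane, and extend them to
lists of length `2n` by appending the conjugates. Then for any permutation `σ` of the
`2n` indices there is a permutation `π` of `{1, …, n}` such that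
`2 * ∑ i, |μᵢ - δ_{π i}|² ≤ ∑ i, |μᵢ - δ_{σ i}|²` (sum over all `2n` indices). -/
theorem perm_halving {n : ℕ} (mu delta : Fin n → ℂ)
    (hmu : ∀ i, 0 ≤ (mu i).im) (hdelta : ∀ i, 0 ≤ (delta i).im)
    (sigma : Equiv.Perm (Fin n ⊕ Fin n)) :
    ∃ π : Equiv.Perm (Fin n),
      2 * ∑ i, ‖mu i - delta (π i)‖ ^ 2 ≤
        ∑ i : Fin n ⊕ Fin n,
          ‖Sum.elim mu (fun j => starRingEnd ℂ (mu j)) i -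
              Sum.elim delta (fun j => starRingEnd ℂ (delta j)) (sigma i)‖ ^ 2 := by
  obtain ⟨π, hπ⟩ := exists_perm_mul_sum_le_sum_comp sigma card_filter_sum_elim_id two_ne_zero
    fun i j => ‖mu i - delta j‖ ^ 2
  refine ⟨π, ?_⟩
  push_cast at hπ
  refine hπ.trans (sum_le_sum fun k _ => ?_)
  gcongr
  exact Complex.norm_sub_le_norm_sum_elim_conj_sub hmu hdelta k (sigma k)
end

section
/- Let P(λ) = Iλᵐ + A_{m−1}λ^{m−1} + ⋯ + A₁λ + A₀ be a monic n×n quaternion matrix polynomial with block companion matrix C_P ∈ M_{mn}(ℍ), and let P_χ(λ) = Iλᵐ + χ_{A_{m−1}}λ^{m−1} + ⋯ + χ_{A₁}λ + χ_{A₀} be its complex adjoint matrix polynomial with block companion matrix C_{P_χ} ∈ M_{2mn}(ℂ). Then the complex adjoint matrix χ_{C_P} of C_P is similar to C_{P_χ} via a permutation matrix: χ_{C_P} = Q C_{P_χ} Q⁻¹ where Q is the block permutation matrix Q = E₁₁ + E₂₃ + E₃₅ + ⋯ + E_{m,2m−1} + E_{m+1,2} + E_{m+2,4} + ⋯ + E_{2m,2m},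 with E_{ij} the 2mn×2mn block matrix (n×n blocks) having identity in block position (i,j) and zeros elsewhere. -/
/-! `Q` is the permutation matrix of the regrouping
`(Fin m × Fin n) ⊕ (Fin m × Fin n) ≃ Fin m × (Fin n ⊕ Fin n)`, so `Q C Qᵀ` is `C` with its indices
regrouped. After regrouping, the `(p, q)` block of `χ_{C_P}` is `χ` of the `(p, q)` block of `C_P`,
which is `0`, `I` or `-A_q`; as `χ` sends these to `0`, `I` and `-χ_{A_q}`, it is the `(p, q)` block
of `C_{P_χ}`. -/

open scoped Quaternion
open Matrix
open Polynomial

noncomputable section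

/-- The block companion matrix of the monic matrix polynomial
`P(λ) = I λ^m + A_{m-1} λ^{m-1} + ⋯ + A₁ λ + A₀`:
all rows of blocks but the last have an identity block on the superdiagonal, and the
last row of blocks is `(-A₀, -A₁, …, -A_{m-1})`. -/
def companion {m : ℕ} {ι : Type*} [DecidableEq ι] {R : Type*} [Ring R]
    (A : Fin m → Matrix ι ι R) : Matrix (Fin m × ι) (Fin m × ι) R :=
  fun p q =>
    if (p.1 : ℕ) + 1 = m then -(A q.1 p.2 q.2)
    else if (q.1 : ℕ) = (p.1 : ℕ) + 1 then (if p.2 = q.2 then 1 else 0) else 0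

/-- The reindexing bijection underlying the block permutation matrix
`Q = E₁₁ + E₂₃ + ⋯ + E_{m,2m-1} + E_{m+1,2} + E_{m+2,4} + ⋯ + E_{2m,2m}`:
the row block `i` of `χ_{C_P}` (for `i ≤ m`) corresponds to the column block `2i - 1` of
`C_{P_χ}`, and the row block `m + i` corresponds to the column block `2i`. -/
def chiCompanionEquiv {m n : ℕ} :
    (Fin m × Fin n) ⊕ (Fin m × Fin n) ≃ Fin m × (Fin n ⊕ Fin n) where
  toFun x := Sum.elim (fun p => (p.1, Sum.inl p.2)) (fun p => (p.1, Sum.inr p.2)) x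
  invFun y := Sum.elim (fun k => Sum.inl (y.1, k)) (fun k => Sum.inr (y.1, k)) y.2
  left_inv := by rintro (⟨i, k⟩ | ⟨i, k⟩) <;> rfl
  right_inv := by rintro ⟨i, k | k⟩ <;> rfl

/-- The block permutation matrix
`Q = E₁₁ + E₂₃ + ⋯ + E_{m,2m-1} + E_{m+1,2} + E_{m+2,4} + ⋯ + E_{2m,2m}`
(each `E_{ij}` has an `n × n` identity block in block position `(i, j)` and zeros
elsewhere). -/
def permQ {m n : ℕ} :
    Matrix ((Fin m × Fin n) ⊕ (Fin m × Fin n)) (Fin m × (Fin n ⊕ Fin n)) ℂ :=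
  fun a b => if chiCompanionEquiv a = b then 1 else 0

lemma permQ_eq_toPEquiv_toMatrix {m n : ℕ} :
    permQ (m := m) (n := n) = (chiCompanionEquiv (m := m) (n := n)).toPEquiv.toMatrix := by
  ext a b
  simp [permQ, PEquiv.toMatrix_apply]

lemma chiCompanionEquiv_eq_prodSumDistrib_symm {m n : ℕ} :
    chiCompanionEquiv (m := m) (n := n) = (Equiv.prodSumDistrib (Fin m) (Fin n) (Fin n)).symm := by
  ext (⟨i, k⟩ | ⟨i, k⟩) <;> rfl

namespace PEquiv

variable {κ ι R : Type*} [DecidableEq κ] [DecidableEq ι] [Semiring R]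

lemma toMatrix_toPEquiv_mul_transpose [Fintype ι] (e : κ ≃ ι) :
    (e.toPEquiv.toMatrix : Matrix κ ι R) * (e.toPEquiv.toMatrixᵀ : Matrix ι κ R) = 1 := by
  rw [← toMatrix_symm, ← toMatrix_trans, ← Equiv.toPEquiv_symm, ← Equiv.toPEquiv_trans,
    Equiv.self_trans_symm, Equiv.toPEquiv_refl, toMatrix_refl]

lemma transpose_toMatrix_toPEquiv_mul [Fintype κ] (e : κ ≃ ι) :
    (e.toPEquiv.toMatrixᵀ : Matrix ι κ R) * (e.toPEquiv.toMatrix : Matrix κ ι R) = 1 := by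
  rw [← toMatrix_symm, ← toMatrix_trans, ← Equiv.toPEquiv_symm, ← Equiv.toPEquiv_trans,
    Equiv.symm_trans_self, Equiv.toPEquiv_refl, toMatrix_refl]

lemma toMatrix_toPEquiv_mul_mul_transpose [Fintype ι] (e : κ ≃ ι) (M : Matrix ι ι R) :
    (e.toPEquiv.toMatrix : Matrix κ ι R) * M * (e.toPEquiv.toMatrixᵀ : Matrix ι κ R) =
      M.submatrix e e := by
  rw [← toMatrix_symm, ← Equiv.toPEquiv_symm, toMatrix_toPEquiv_mul, mul_toMatrix_toPEquiv,
    submatrix_submatrix, Equiv.symm_symm]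
  rfl

end PEquiv

namespace Matrix

variable {ι : Type*}

@[simp] lemma chi_zero : chi (0 : Matrix ι ι ℍ[ℝ]) = 0 := by
  ext (i | i) (j | j) <;> simp [chi, Quaternion.c1, Quaternion.c2, Complex.ext_iff]

@[simp] lemma chi_one [DecidableEq ι] : chi (1 : Matrix ι ι ℍ[ℝ]) = 1 := by
  ext (i | i) (j | j) <;> by_cases h : i = j <;>
    simp [chi, one_apply, h, Quaternion.c1, Quaternion.c2, Complex.ext_iff]

@[simp] lemma chi_neg (M : Matrix ι ι ℍ[ℝ]) : chi (-M) = -chi M := by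
  ext (i | i) (j | j) <;> rfl

lemma chi_prodSumDistrib_apply {β : Type*} (M : Matrix (β × ι) (β × ι) ℍ[ℝ]) (p q : β)
    (s t : ι ⊕ ι) :
    chi M (Equiv.prodSumDistrib β ι ι (p, s)) (Equiv.prodSumDistrib β ι ι (q, t)) =
      chi (M.submatrix (Prod.mk p) (Prod.mk q)) s t := by
  rcases s with s | s <;> rcases t with t | t <;> rfl

end Matrix

lemma companion_submatrix_prodMk {m : ℕ} {ι R : Type*} [DecidableEq ι] [Ring R]
    (A : Fin m → Matrix ι ι R) (p q : Fin m) :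
    (companion A).submatrix (Prod.mk p) (Prod.mk q) =
      if (p : ℕ) + 1 = m then -A q else if (q : ℕ) = p + 1 then 1 else 0 := by
  ext k l
  simp only [submatrix_apply, companion]
  split_ifs <;> simp [one_apply, *]

lemma chi_companion_submatrix_prodMk {m : ℕ} {ι : Type*} [DecidableEq ι]
    (A : Fin m → Matrix ι ι ℍ[ℝ]) (p q : Fin m) :
    chi ((companion A).submatrix (Prod.mk p) (Prod.mk q)) =
      (companion fun i => chi (A i)).submatrix (Prod.mk p) (Prod.mk q) := by
  simp only [companion_submatrix_prodMk, apply_ite chi, chi_neg, chi_one, chi_zero]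

/-- Let `P(λ) = I λ^m + A_{m-1} λ^{m-1} + ⋯ + A₀` be a monic quaternion matrix polynomial
with block companion matrix `C_P`, and let `P_χ` be its complex adjoint matrix polynomial
with block companion matrix `C_{P_χ}`. Then `χ_{C_P} = Q * C_{P_χ} * Q⁻¹` where `Q` is the
block permutation matrix `E₁₁ + E₂₃ + ⋯ + E_{m,2m-1} + E_{m+1,2} + ⋯ + E_{2m,2m}`
(whose inverse is its transpose). -/
theorem chi_companion_similar {m n : ℕ} (A : Fin m → Matrix (Fin n) (Fin n) ℍ[ℝ]) :
    permQ (m := m) (n := n) * (permQ (m := m) (n := n))ᵀ = 1 ∧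
    (permQ (m := m) (n := n))ᵀ * permQ (m := m) (n := n) = 1 ∧
    Matrix.chi (companion A) =
      permQ (m := m) (n := n) * companion (fun i => Matrix.chi (A i)) * (permQ (m := m) (n := n))ᵀ := by
  rw [permQ_eq_toPEquiv_toMatrix]
  refine ⟨PEquiv.toMatrix_toPEquiv_mul_transpose _, PEquiv.transpose_toMatrix_toPEquiv_mul _, ?_⟩
  rw [PEquiv.toMatrix_toPEquiv_mul_mul_transpose, chiCompanionEquiv_eq_prodSumDistrib_symm]
  ext a b
  obtain ⟨⟨p, s⟩, rfl⟩ := (Equiv.prodSumDistrib _ _ _).surjective a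
  obtain ⟨⟨q, t⟩, rfl⟩ := (Equiv.prodSumDistrib _ _ _).surjective b
  rw [chi_prodSumDistrib_apply, chi_companion_submatrix_prodMk]
  simp only [submatrix_apply, Equiv.symm_apply_apply]
end
end

section
/- Let P(λ) = A_mλᵐ + A_{m−1}λ^{m−1} + ⋯ + A₁λ + A₀ be an n×n quaternion matrix polynomial all of whose coefficients A₀, A₁, …, A_m are unitary quaternion matrices. If λ₀ ∈ ℍ is a right eigenvalue of P(λ), then 1/2 < |λ₀| < 2. -/
/-!
Let `x ≠ 0` be an eigenvector for `λ₀` and put `vᵢ = Aᵢ x λ₀ⁱ ∈ ℍⁿ`. Since unitary matrices are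
isometries of `ℍⁿ` and right multiplication by `λ₀ⁱ` scales the norm by `|λ₀|ⁱ`, we get
`‖vᵢ‖ = ‖x‖ |λ₀|ⁱ`, while `∑ vᵢ = 0`. Hence neither the last nor the first term can dominate the
others: `|λ₀|ᵐ ≤ ∑_{i<m} |λ₀|ⁱ` and `1 ≤ ∑_{1≤i≤m} |λ₀|ⁱ`. Summing the geometric series, the first
inequality forces `|λ₀| < 2` and the second forces `|λ₀| > 1/2`.
-/

open scoped Quaternion
open Matrix Finset

theorem lt_two_of_pow_le_geom_sum {r : ℝ} {m : ℕ} (h : r ^ m ≤ ∑ i ∈ range m, r ^ i) :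
    r < 2 := by
  by_contra! hr
  have hgeom : (∑ i ∈ range m, r ^ i) * (r - 1) = r ^ m - 1 := geom_sum_mul r m
  have hsum : 0 ≤ ∑ i ∈ range m, r ^ i := sum_nonneg fun i _ => by positivity
  nlinarith

theorem one_half_lt_of_one_le_sum_pow_succ {r : ℝ} (hr : 0 ≤ r) {m : ℕ}
    (h : 1 ≤ ∑ i ∈ range m, r ^ (i + 1)) : 1 / 2 < r := by
  by_contra! hr'
  have hgeom : (∑ i ∈ range m, r ^ i) * (1 - r) = 1 - r ^ m := geom_sum_mul_neg r m
  have hshift : ∑ i ∈ range m, r ^ (i + 1) = r * ∑ i ∈ range m, r ^ i := by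
    rw [mul_sum]; exact sum_congr rfl fun i _ => pow_succ' r i
  have hsum : 0 ≤ ∑ i ∈ range m, r ^ i := sum_nonneg fun i _ => by positivity
  rcases hr.eq_or_lt with rfl | hpos
  · norm_num at h
  · nlinarith [pow_pos hpos m]

section VanishingSum

variable {E : Type*} [SeminormedAddCommGroup E]

theorem norm_le_sum_norm_of_add_sum_eq_zero {ι : Type*} (s : Finset ι) {a : E} {b : ι → E}
    (h : a + ∑ i ∈ s, b i = 0) : ‖a‖ ≤ ∑ i ∈ s, ‖b i‖ := by
  rw [eq_neg_of_add_eq_zero_left h, norm_neg]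
  exact norm_sum_le s b

variable {m : ℕ} {v : Fin (m + 1) → E} {c r : ℝ}

theorem lt_two_of_sum_eq_zero_of_norm_eq_mul_pow (hc : 0 < c) (hv : ∑ i, v i = 0)
    (hnorm : ∀ i, ‖v i‖ = c * r ^ (i : ℕ)) : r < 2 := by
  rw [Fin.sum_univ_castSucc, add_comm] at hv
  have hle := norm_le_sum_norm_of_add_sum_eq_zero univ hv
  simp only [hnorm, Fin.val_last, Fin.val_castSucc, ← mul_sum] at hle
  rw [Fin.sum_univ_eq_sum_range (r ^ ·)] at hle
  exact lt_two_of_pow_le_geom_sum (le_of_mul_le_mul_left hle hc)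

theorem one_half_lt_of_sum_eq_zero_of_norm_eq_mul_pow (hc : 0 < c) (hr : 0 ≤ r)
    (hv : ∑ i, v i = 0) (hnorm : ∀ i, ‖v i‖ = c * r ^ (i : ℕ)) : 1 / 2 < r := by
  rw [Fin.sum_univ_succ] at hv
  have hle := norm_le_sum_norm_of_add_sum_eq_zero univ hv
  simp only [hnorm, Fin.val_zero, Fin.val_succ, pow_zero, ← mul_sum] at hle
  rw [Fin.sum_univ_eq_sum_range (fun i => r ^ (i + 1))] at hle
  exact one_half_lt_of_one_le_sum_pow_succ hr (le_of_mul_le_mul_left hle hc)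

end VanishingSum

theorem PiLp.norm_toLp_mul_right {𝕜 ι : Type*} [NormedDivisionRing 𝕜] [Fintype ι]
    (p : ENNReal) [Fact (1 ≤ p)] (v : ι → 𝕜) (c : 𝕜) :
    ‖WithLp.toLp p (fun k => v k * c)‖ = ‖WithLp.toLp p v‖ * ‖c‖ := by
  -- right multiplication by `c` is the action of `MulOpposite.op c`
  rw [mul_comm, ← MulOpposite.norm_op c, ← norm_smul]
  rfl

namespace Quaternion

theorem star_dotProduct_self {ι : Type*} [Fintype ι] (v : ι → ℍ[ℝ]) :
    star v ⬝ᵥ v = algebraMap ℝ ℍ[ℝ] (∑ k, ‖v k‖ ^ 2) := by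
  rw [dotProduct, map_sum]
  refine sum_congr rfl fun k _ => ?_
  rw [Pi.star_apply, star_mul_self, normSq_eq_norm_mul_self, sq, algebraMap_def]

theorem norm_toLp_mulVec_of_conjTranspose_mul_self {ι : Type*} [Fintype ι] [DecidableEq ι]
    {A : Matrix ι ι ℍ[ℝ]} (hA : Aᴴ * A = 1) (x : ι → ℍ[ℝ]) :
    ‖WithLp.toLp 2 (A *ᵥ x)‖ = ‖WithLp.toLp 2 x‖ := by
  have hdot : star (A *ᵥ x) ⬝ᵥ (A *ᵥ x) = star x ⬝ᵥ x := by
    rw [star_mulVec, dotProduct_mulVec, vecMul_vecMul, hA, vecMul_one]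
  rw [star_dotProduct_self, star_dotProduct_self] at hdot
  rw [← sq_eq_sq₀ (norm_nonneg _) (norm_nonneg _), PiLp.norm_sq_eq_of_L2,
    PiLp.norm_sq_eq_of_L2]
  exact algebraMap_injective hdot

end Quaternion

/-- If all coefficients `A₀, …, A_m` of the quaternion matrix polynomial
`P(λ) = ∑ Aᵢ λⁱ` are unitary quaternion matrices and `λ₀` is a right eigenvalue of `P`
(i.e. `∑ i, Aᵢ x λ₀ⁱ = 0` for some nonzero `x`), then `1/2 < |λ₀| < 2`. -/
theorem right_eigenvalue_bound_unitary {m n : ℕ}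
    (A : Fin (m + 1) → Matrix (Fin n) (Fin n) ℍ[ℝ])
    (hU : ∀ i, A i * (A i)ᴴ = 1 ∧ (A i)ᴴ * A i = 1)
    (q : ℍ[ℝ])
    (heig : ∃ x : Fin n → ℍ[ℝ], x ≠ 0 ∧
      ∀ k, ∑ i : Fin (m + 1), (A i).mulVec x k * q ^ (i : ℕ) = 0) :
    1 / 2 < ‖q‖ ∧ ‖q‖ < 2 := by
  obtain ⟨x, hx, heq⟩ := heig
  let v : Fin (m + 1) → PiLp 2 (fun _ : Fin n => ℍ[ℝ]) :=
    fun i => WithLp.toLp 2 (fun k => (A i *ᵥ x) k * q ^ (i : ℕ))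
  have hv : ∑ i, v i = 0 := by
    refine WithLp.ofLp_injective 2 (funext fun k => ?_)
    simpa [v] using heq k
  have hnorm : ∀ i, ‖v i‖ = ‖WithLp.toLp 2 x‖ * ‖q‖ ^ (i : ℕ) := fun i => by
    rw [PiLp.norm_toLp_mul_right, Quaternion.norm_toLp_mulVec_of_conjTranspose_mul_self (hU i).2,
      norm_pow]
  have hc : 0 < ‖WithLp.toLp 2 x‖ := by simpa using hx
  exact ⟨one_half_lt_of_sum_eq_zero_of_norm_eq_mul_pow hc (norm_nonneg q) hv hnorm,
    lt_two_of_sum_eq_zero_of_norm_eq_mul_pow hc hv hnorm⟩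
end

section
/- Let P(λ) = A_mλᵐ + A_{m−1}λ^{m−1} + ⋯ + A₁λ + A₀ be an n×n quaternion matrix polynomial all of whose coefficients are (real) doubly stochastic matrices, with the leading coefficient A_m and the constant term A₀ being permutation matrices. If λ₀ ∈ ℍ is a right eigenvalue of P(λ), then 1/2 < |λ₀| < 2. -/
open scoped Quaternion

noncomputable section

/-!
Let `x` be a right eigenvector and `x j₀` an entry of maximal modulus. The row of the eigenvalue
equation that the permutation `A₀` sends to `j₀` writes `x j₀` as `-∑_{i ≥ 1} (Aᵢ x)ₖ qⁱ`, and
each `(Aᵢ x)ₖ`, a convex combination of entries of `x`, has modulus at most `|x j₀|`. Hence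
`|x j₀| ≤ |x j₀| (|q| + ⋯ + |q|ᵐ)`, which is impossible when `|q| ≤ 1/2`. For the upper bound,
multiplying the equation on the right by `q⁻ᵐ` shows that `q⁻¹` is a right eigenvalue of the
reversed polynomial, whose constant term is the permutation matrix `A_m`.
-/

open Finset Matrix

lemma sum_pow_succ_lt_one {t : ℝ} (h0 : 0 ≤ t) (ht : t ≤ 1 / 2) (m : ℕ) :
    ∑ i ∈ range m, t ^ (i + 1) < 1 := by
  rcases h0.eq_or_lt with rfl | hpos
  · simp
  have hgeom := geom_sum_mul_neg t m
  have hS : 0 ≤ ∑ i ∈ range m, t ^ i := sum_nonneg fun i _ => pow_nonneg h0 i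
  have htm : 0 < t ^ m := pow_pos hpos m
  calc ∑ i ∈ range m, t ^ (i + 1) = t * ∑ i ∈ range m, t ^ i := by
        simp only [pow_succ', mul_sum]
    _ ≤ (∑ i ∈ range m, t ^ i) * (1 - t) := by nlinarith
    _ < 1 := by linarith

lemma pow_mul_inv_pow_of_le {K : Type*} [DivisionRing K] {q : K} (hq : q ≠ 0) {i m : ℕ}
    (h : i ≤ m) : q ^ i * q⁻¹ ^ m = q⁻¹ ^ (m - i) := by
  rw [← Nat.add_sub_cancel' h, pow_add, ← mul_assoc, inv_pow, mul_inv_cancel₀ (pow_ne_zero i hq),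
    one_mul, Nat.add_sub_cancel_left]

variable {𝕜 : Type*} [NormedDivisionRing 𝕜] [NormedAlgebra ℝ 𝕜]
  {n : Type*} [Fintype n]

def IsRightEigenvalue {m : ℕ} (A : Fin (m + 1) → Matrix n n ℝ) (q : 𝕜) : Prop :=
  ∃ x : n → 𝕜, x ≠ 0 ∧ ∀ k, ∑ i, ((A i).map (algebraMap ℝ 𝕜) *ᵥ x) k * q ^ (i : ℕ) = 0

namespace IsRightEigenvalue

variable {m : ℕ} {A : Fin (m + 1) → Matrix n n ℝ} {q : 𝕜}

lemma rev (h : IsRightEigenvalue A q) (hq : q ≠ 0) : IsRightEigenvalue (A ∘ Fin.rev) q⁻¹ := by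
  obtain ⟨x, hx, heq⟩ := h
  refine ⟨x, hx, fun k => ?_⟩
  calc ∑ i, ((A (Fin.rev i)).map (algebraMap ℝ 𝕜) *ᵥ x) k * q⁻¹ ^ (i : ℕ)
      = ∑ i, ((A i).map (algebraMap ℝ 𝕜) *ᵥ x) k * q⁻¹ ^ (m - i : ℕ) := by
        rw [← Equiv.sum_comp Fin.revPerm]
        refine sum_congr rfl fun i _ => ?_
        simp only [Fin.revPerm_apply, Fin.rev_rev, Fin.val_rev]
        congr 2
        omega
    _ = (∑ i, ((A i).map (algebraMap ℝ 𝕜) *ᵥ x) k * q ^ (i : ℕ)) * q⁻¹ ^ m := by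
        rw [sum_mul]
        refine sum_congr rfl fun i _ => ?_
        rw [mul_assoc, pow_mul_inv_pow_of_le hq (Nat.lt_succ_iff.mp i.isLt)]
    _ = 0 := by rw [heq k, zero_mul]

end IsRightEigenvalue

variable [DecidableEq n]

lemma norm_map_mulVec_le_of_mem_rowStochastic {A : Matrix n n ℝ} (hA : A ∈ rowStochastic ℝ n)
    {x : n → 𝕜} {M : ℝ} (hx : ∀ j, ‖x j‖ ≤ M) (k : n) :
    ‖(A.map (algebraMap ℝ 𝕜) *ᵥ x) k‖ ≤ M :=
  calc ‖(A.map (algebraMap ℝ 𝕜) *ᵥ x) k‖ = ‖∑ j, algebraMap ℝ 𝕜 (A k j) * x j‖ := rfl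
    _ ≤ ∑ j, A k j * ‖x j‖ := by
        refine norm_sum_le_of_le _ fun j _ => ?_
        rw [norm_mul, norm_algebraMap', Real.norm_of_nonneg (nonneg_of_mem_rowStochastic hA)]
    _ ≤ ∑ j, A k j * M :=
        sum_le_sum fun j _ => mul_le_mul_of_nonneg_left (hx j) (nonneg_of_mem_rowStochastic hA)
    _ = M := by rw [← sum_mul, sum_row_of_mem_rowStochastic hA, one_mul]

lemma permMatrix_map_mulVec (σ : Equiv.Perm n) (x : n → 𝕜) :
    (σ.permMatrix ℝ).map (algebraMap ℝ 𝕜) *ᵥ x = x ∘ σ := by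
  rw [Equiv.Perm.permMatrix, PEquiv.map_toMatrix, PEquiv.toMatrix_toPEquiv_mulVec]

lemma IsRightEigenvalue.one_half_lt_norm {m : ℕ} {A : Fin (m + 1) → Matrix n n ℝ} {q : 𝕜}
    (h : IsRightEigenvalue A q) (hA : ∀ i, A i ∈ rowStochastic ℝ n) {σ : Equiv.Perm n}
    (hA₀ : A 0 = σ.permMatrix ℝ) : 1 / 2 < ‖q‖ := by
  obtain ⟨x, hx, heq⟩ := h
  obtain ⟨k, hk⟩ := Function.ne_iff.mp hx
  have : Nonempty n := ⟨k⟩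
  obtain ⟨j₀, hj₀⟩ := Finite.exists_max fun j => ‖x j‖
  have hM : 0 < ‖x j₀‖ := (norm_pos_iff.mpr hk).trans_le (hj₀ k)
  by_contra! hq
  have hrow := heq (σ.symm j₀)
  simp only [Fin.sum_univ_succ, hA₀, permMatrix_map_mulVec, Function.comp_apply,
    Equiv.apply_symm_apply, Fin.val_zero, pow_zero, mul_one, Fin.val_succ] at hrow
  have key : ‖x j₀‖ < ‖x j₀‖ := calc ‖x j₀‖
    _ = ‖∑ i : Fin m,
          ((A i.succ).map (algebraMap ℝ 𝕜) *ᵥ x) (σ.symm j₀) * q ^ ((i : ℕ) + 1)‖ := by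
        rw [eq_neg_of_add_eq_zero_left hrow, norm_neg]
    _ ≤ ∑ i : Fin m, ‖x j₀‖ * ‖q‖ ^ ((i : ℕ) + 1) := by
        refine norm_sum_le_of_le _ fun i _ => ?_
        rw [norm_mul, norm_pow]
        gcongr
        exact norm_map_mulVec_le_of_mem_rowStochastic (hA _) hj₀ _
    _ = ‖x j₀‖ * ∑ i ∈ range m, ‖q‖ ^ (i + 1) := by
        rw [mul_sum, Fin.sum_univ_eq_sum_range (fun i => ‖x j₀‖ * ‖q‖ ^ (i + 1))]
    _ < ‖x j₀‖ := mul_lt_of_lt_one_right hM (sum_pow_succ_lt_one (norm_nonneg q) hq m)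
  exact lt_irrefl _ key

/-- If all coefficients of the quaternion matrix polynomial `P(λ) = ∑ Aᵢ λⁱ` are (real)
doubly stochastic matrices, with the leading coefficient `A_m` and the constant term `A₀`
permutation matrices, and `λ₀` is a right eigenvalue of `P`
(i.e. `∑ i, Aᵢ x λ₀ⁱ = 0` for some nonzero `x`), then `1/2 < |λ₀| < 2`. -/
theorem right_eigenvalue_bound_doubly_stochastic {m n : ℕ}
    (B : Fin (m + 1) → Matrix (Fin n) (Fin n) ℝ)
    (hds : ∀ i, B i ∈ doublyStochastic ℝ (Fin n))
    (hlead : ∃ σ : Equiv.Perm (Fin n), B (Fin.last m) = σ.permMatrix ℝ)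
    (hconst : ∃ σ : Equiv.Perm (Fin n), B 0 = σ.permMatrix ℝ)
    (q : ℍ[ℝ])
    (heig : ∃ x : Fin n → ℍ[ℝ], x ≠ 0 ∧
      ∀ k, ∑ i : Fin (m + 1),
        ((B i).map (fun a => (a : ℍ[ℝ]))).mulVec x k * q ^ (i : ℕ) = 0) :
    1 / 2 < ‖q‖ ∧ ‖q‖ < 2 := by
  have hB : ∀ i, B i ∈ rowStochastic ℝ (Fin n) := fun i =>
    (mem_doublyStochastic_iff_mem_rowStochastic_and_mem_colStochastic.mp (hds i)).1
  have hq : IsRightEigenvalue B q := heig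
  obtain ⟨σ₀, hσ₀⟩ := hconst
  obtain ⟨σₘ, hσₘ⟩ := hlead
  refine ⟨hq.one_half_lt_norm hB hσ₀, ?_⟩
  rcases eq_or_ne q 0 with rfl | hq₀
  · simp
  have hrev : 1 / 2 < ‖q⁻¹‖ :=
    (hq.rev hq₀).one_half_lt_norm (fun _ => hB _) (σ := σₘ) (by simpa using hσₘ)
  rwa [norm_inv, lt_inv_comm₀ one_half_pos (norm_pos_iff.mpr hq₀), one_div, inv_inv] at hrev
end
end
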